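/- arXiv:1709.04500 — 5 statements merged into one kernel-verified Lean document; each statement's English description precedes it below -/
import Mathlib

section
/- For positive integers M1, M2 and positive reals p1, p2, the double sum ∑_{k=1}^{M2} ∑_{j=1}^{M1} (-1)^{j+k} C(M1,j) C(M2,k) · p2 k/(p1 j + p2 k) equals 1 − p2 M2 ∫_0^1 (1 − x^{p1})^{M1} (1 − x^{p2})^{M2−1} x^{p2−1} dx. -/
/-!
Expanding both binomials and integrating term by term turns the integral into
`∑_{j ≤ M1, k < M2} (-1)^(j+k) C(M1,j) C(M2-1,k) / (p1 j + p2 (k+1))`.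
Absorbing the factor `p2 M2` through `M2 C(M2-1,k) = (k+1) C(M2,k+1)` makes `p2 M2` times the
integral equal to minus the double sum of the statement extended to the row `j = 0`, and that
row is `∑_{k ≥ 1} (-1)^k C(M2,k) = -1`.
-/

open Finset Real

theorem sum_Icc_one_eq_sum_range {M : Type*} [AddCommMonoid M] (f : ℕ → M) (n : ℕ) :
    ∑ k ∈ Icc 1 n, f k = ∑ k ∈ range n, f (k + 1) := by
  rw [range_eq_Ico, sum_Ico_add' f 0 n 1, zero_add, Ico_add_one_right_eq_Icc]

theorem alternating_sum_Icc_choose {R : Type*} [Ring R] {n : ℕ} (hn : n ≠ 0) :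
    ∑ k ∈ Icc 1 n, (-1 : R) ^ k * n.choose k = -1 := by
  have h := congrArg (Int.cast : ℤ → R) (Int.alternating_sum_range_choose_of_ne hn)
  push_cast at h
  rw [sum_range_succ', ← sum_Icc_one_eq_sum_range (fun k => (-1 : R) ^ k * n.choose k)] at h
  simpa [eq_neg_iff_add_eq_zero] using h

theorem one_sub_pow_eq_sum {R : Type*} [CommRing R] (y : R) (n : ℕ) :
    (1 - y) ^ n = ∑ j ∈ range (n + 1), (-1) ^ j * n.choose j * y ^ j := by
  rw [sub_eq_neg_add, add_pow]
  exact sum_congr rfl fun j _ => by rw [neg_pow]; ring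

theorem one_sub_rpow_pow_eq_sum {x : ℝ} (hx : 0 ≤ x) (a : ℝ) (n : ℕ) :
    (1 - x ^ a) ^ n = ∑ j ∈ range (n + 1), (-1) ^ j * n.choose j * x ^ (a * j) := by
  simp only [one_sub_pow_eq_sum, rpow_mul hx, rpow_natCast]

theorem integral_sum_mul_rpow {ι : Type*} (s : Finset ι) (c e : ι → ℝ)
    (he : ∀ i ∈ s, -1 < e i) :
    ∫ x in (0 : ℝ)..1, ∑ i ∈ s, c i * x ^ e i = ∑ i ∈ s, c i / (e i + 1) := by
  rw [intervalIntegral.integral_finsetSum fun i hi =>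
    (intervalIntegral.intervalIntegrable_rpow' (he i hi)).const_mul _]
  refine sum_congr rfl fun i hi => ?_
  rw [intervalIntegral.integral_const_mul, integral_rpow (Or.inl (he i hi)), one_rpow,
    zero_rpow (by linarith [he i hi]), sub_zero, mul_one_div]

theorem integral_one_sub_rpow_pow_mul_one_sub_rpow_pow_mul_rpow_sub_one {a b c : ℝ}
    (ha : 0 ≤ a) (hb : 0 ≤ b) (hc : 0 < c) (m n : ℕ) :
    ∫ x in (0 : ℝ)..1, (1 - x ^ a) ^ m * (1 - x ^ b) ^ n * x ^ (c - 1)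
      = ∑ j ∈ range (m + 1), ∑ k ∈ range (n + 1),
          (-1) ^ (j + k) * m.choose j * n.choose k / (a * j + b * k + c) := by
  set coef : ℕ × ℕ → ℝ := fun p => (-1) ^ (p.1 + p.2) * m.choose p.1 * n.choose p.2
  set e : ℕ × ℕ → ℝ := fun p => a * p.1 + b * p.2 + c - 1
  have h_expand : ∀ x : ℝ, 0 < x →
      (1 - x ^ a) ^ m * (1 - x ^ b) ^ n * x ^ (c - 1)
        = ∑ p ∈ range (m + 1) ×ˢ range (n + 1), coef p * x ^ e p := by
    intro x hx
    rw [one_sub_rpow_pow_eq_sum hx.le, one_sub_rpow_pow_eq_sum hx.le, sum_mul_sum, sum_mul,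
      sum_product]
    refine sum_congr rfl fun j _ => ?_
    rw [sum_mul]
    refine sum_congr rfl fun k _ => ?_
    simp only [coef, e, sub_eq_add_neg _ (1 : ℝ), rpow_add hx, pow_add]
    ring
  rw [intervalIntegral.integral_congr_ae (MeasureTheory.ae_of_all _ fun x hx =>
      h_expand x (Set.uIoc_of_le (zero_le_one' ℝ) ▸ hx).1),
    integral_sum_mul_rpow _ _ _ fun p _ => ?_, sum_product]
  · simp only [coef, e, sub_add_cancel, mul_div_assoc]
  · have : 0 < a * p.1 + b * p.2 + c := by positivity
    linarith

theorem mul_add_one_mul_choose_div {K : Type*} [Field K] (b d : K) (n k : ℕ) :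
    b * (n + 1 : ℕ) * (n.choose k / d) = (n + 1).choose (k + 1) * (b * (k + 1 : ℕ) / d) := by
  have h : ((n + 1 : ℕ) : K) * n.choose k = (n + 1).choose (k + 1) * (k + 1 : ℕ) := by
    rw [← Nat.cast_mul, ← Nat.cast_mul, Nat.add_one_mul_choose_eq]
  linear_combination (b / d) * h

theorem stmt_1_general (M1 M2 : ℕ) (hM2 : 0 < M2)
    (p1 p2 : ℝ) (hp1 : 0 < p1) (hp2 : 0 < p2) :
    ∑ k ∈ Finset.Icc 1 M2, ∑ j ∈ Finset.Icc 1 M1,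
      (-1 : ℝ) ^ (j + k) * (M1.choose j) * (M2.choose k) *
        (p2 * k / (p1 * j + p2 * k))
    = 1 - p2 * M2 *
        ∫ x in (0:ℝ)..1, (1 - x ^ p1) ^ M1 * (1 - x ^ p2) ^ (M2 - 1) * x ^ (p2 - 1) := by
  obtain ⟨n, rfl⟩ := Nat.exists_eq_add_one_of_ne_zero hM2.ne'
  set T : ℕ → ℕ → ℝ := fun j k =>
    (-1) ^ (j + k) * M1.choose j * (n + 1).choose k * (p2 * k / (p1 * j + p2 * k))
  have h_shift : ∀ j k : ℕ, p2 * (n + 1 : ℕ) *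
      ((-1) ^ (j + k) * M1.choose j * n.choose k / (p1 * j + p2 * k + p2)) = -T j (k + 1) := by
    intro j k
    have h := mul_add_one_mul_choose_div p2 (p1 * j + p2 * (k + 1 : ℕ)) n k
    simp only [T]
    push_cast at h ⊢
    linear_combination (-1) ^ (j + k) * M1.choose j * h
  have h_row_zero : ∑ k ∈ Icc 1 (n + 1), T 0 k = -1 := by
    rw [← alternating_sum_Icc_choose n.succ_ne_zero]
    refine sum_congr rfl fun k hk => ?_
    have hk : (k : ℝ) ≠ 0 := by have := (mem_Icc.mp hk).1; positivity
    simp [T, hp2.ne', hk]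
  rw [Nat.add_sub_cancel, integral_one_sub_rpow_pow_mul_one_sub_rpow_pow_mul_rpow_sub_one
    hp1.le hp2.le hp2, mul_sum]
  simp_rw [mul_sum, h_shift, sum_neg_distrib, ← sum_Icc_one_eq_sum_range (T _), sum_range_succ',
    ← sum_Icc_one_eq_sum_range (fun j => ∑ k ∈ Icc 1 (n + 1), T j k), h_row_zero]
  rw [sum_comm]
  ring

theorem stmt_1 (M1 M2 : ℕ) (hM1 : 0 < M1) (hM2 : 0 < M2)
    (p1 p2 : ℝ) (hp1 : 0 < p1) (hp2 : 0 < p2) :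
    ∑ k ∈ Finset.Icc 1 M2, ∑ j ∈ Finset.Icc 1 M1,
      (-1 : ℝ) ^ (j + k) * (M1.choose j) * (M2.choose k) *
        (p2 * k / (p1 * j + p2 * k))
    = 1 - p2 * M2 *
        ∫ x in (0:ℝ)..1, (1 - x ^ p1) ^ M1 * (1 - x ^ p2) ^ (M2 - 1) * x ^ (p2 - 1) :=
  stmt_1_general M1 M2 hM2 p1 p2 hp1 hp2
end

section
/- Let λ > 1, ν1, ν2 positive integers, and for each positive integer M set I_M = ∫_0^1 x^{λ−1}(1−x)^{ν1 M}(1−x^λ)^{ν2 M − 1} dx. Then I_M ~ Γ(λ)/(ν1^λ M^λ) as M → ∞, i.e. I_M · ν1^λ M^λ / Γ(λ) → 1. -/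
/-!
Euler's Beta integral gives `n ^ s * ∫₀¹ x ^ (s - 1) * (1 - x) ^ n = GammaSeq s n → Γ(s)`.
By Bernoulli's inequality `1 - k x ^ s ≤ (1 - x ^ s) ^ k ≤ 1` on `[0, 1]`, so the integral with the
extra factor `(1 - x ^ s) ^ k` lies between `B(s, n) - k B(2s, n)` and `B(s, n)`, writing
`B(s, n) = ∫₀¹ x ^ (s - 1) * (1 - x) ^ n`. After multiplying by `n ^ s` the error term is
`k n ^ (-s) · n ^ (2s) B(2s, n) ≈ k n ^ (-s) Γ(2s)`, which vanishes when `k = O(n)` and `s > 1`.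
-/

open Real Filter

namespace Real

theorem GammaSeq_eq_rpow_mul_integral {s : ℝ} (hs : 0 < s) (n : ℕ) :
    GammaSeq s n = (n : ℝ) ^ s * ∫ x in (0:ℝ)..1, x ^ (s - 1) * (1 - x) ^ n := by
  have h := Complex.GammaSeq_eq_betaIntegral_of_re_pos (s := (s : ℂ)) (by simpa using hs) n
  have hbeta : Complex.betaIntegral (s : ℂ) ((n : ℂ) + 1)
      = ((∫ x in (0:ℝ)..1, x ^ (s - 1) * (1 - x) ^ n : ℝ) : ℂ) := by
    rw [Complex.betaIntegral, ← intervalIntegral.integral_ofReal]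
    refine intervalIntegral.integral_congr fun x hx => ?_
    rw [Set.uIcc_of_le zero_le_one] at hx
    rw [Complex.ofReal_mul, Complex.ofReal_pow, Complex.ofReal_cpow hx.1,
      show ((n : ℂ) + 1 - 1 : ℂ) = ((n : ℕ) : ℂ) by ring, Complex.cpow_natCast]
    push_cast
    ring
  have hseq : Complex.GammaSeq (s : ℂ) n = ((GammaSeq s n : ℝ) : ℂ) := by
    dsimp only [GammaSeq, Complex.GammaSeq]
    push_cast
    rw [Complex.ofReal_cpow n.cast_nonneg, Complex.ofReal_natCast]
  rw [hseq, hbeta, ← Complex.ofReal_natCast, ← Complex.ofReal_cpow n.cast_nonneg,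
    ← Complex.ofReal_mul] at h
  exact_mod_cast h

theorem tendsto_rpow_mul_integral_rpow_mul_one_sub_pow {s : ℝ} (hs : 0 < s) :
    Tendsto (fun n : ℕ => (n : ℝ) ^ s * ∫ x in (0:ℝ)..1, x ^ (s - 1) * (1 - x) ^ n)
      atTop (nhds (Gamma s)) :=
  (GammaSeq_tendsto_Gamma s).congr fun n => GammaSeq_eq_rpow_mul_integral hs n

end Real

theorem one_sub_mul_le_one_sub_pow {y : ℝ} (hy : y ≤ 2) (k : ℕ) : 1 - k * y ≤ (1 - y) ^ k := by
  simpa [sub_eq_add_neg] using one_add_mul_le_pow (a := -y) (by linarith) k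

section BetaBounds

variable {s : ℝ} (hs : 0 < s) (n k : ℕ)
include hs

theorem intervalIntegrable_rpow_mul_one_sub_pow :
    IntervalIntegrable (fun x : ℝ => x ^ (s - 1) * (1 - x) ^ n) MeasureTheory.volume 0 1 :=
  (intervalIntegral.intervalIntegrable_rpow' (by linarith)).mul_continuousOn
    (by fun_prop)

theorem intervalIntegrable_rpow_mul_one_sub_pow_mul_one_sub_rpow_pow :
    IntervalIntegrable (fun x : ℝ => x ^ (s - 1) * (1 - x) ^ n * (1 - x ^ s) ^ k)
      MeasureTheory.volume 0 1 :=
  (intervalIntegrable_rpow_mul_one_sub_pow hs n).mul_continuousOn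
    ((continuous_const.sub (continuous_id.rpow_const fun _ => Or.inr hs.le)).pow k).continuousOn

theorem integral_mul_one_sub_rpow_pow_le :
    ∫ x in (0:ℝ)..1, x ^ (s - 1) * (1 - x) ^ n * (1 - x ^ s) ^ k
      ≤ ∫ x in (0:ℝ)..1, x ^ (s - 1) * (1 - x) ^ n := by
  refine intervalIntegral.integral_mono_on zero_le_one
    (intervalIntegrable_rpow_mul_one_sub_pow_mul_one_sub_rpow_pow hs n k)
    (intervalIntegrable_rpow_mul_one_sub_pow hs n) fun x ⟨hx0, hx1⟩ => ?_
  refine mul_le_of_le_one_right (by positivity) (pow_le_one₀ ?_ ?_)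
  · linarith [rpow_le_one hx0 hx1 hs.le]
  · linarith [rpow_nonneg hx0 s]

theorem integral_sub_mul_integral_le_integral_mul_one_sub_rpow_pow :
    (∫ x in (0:ℝ)..1, x ^ (s - 1) * (1 - x) ^ n)
        - k * ∫ x in (0:ℝ)..1, x ^ (2 * s - 1) * (1 - x) ^ n
      ≤ ∫ x in (0:ℝ)..1, x ^ (s - 1) * (1 - x) ^ n * (1 - x ^ s) ^ k := by
  have hB := intervalIntegrable_rpow_mul_one_sub_pow hs n
  have hB₂ := intervalIntegrable_rpow_mul_one_sub_pow (by linarith : 0 < 2 * s) n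
  rw [← intervalIntegral.integral_const_mul, ← intervalIntegral.integral_sub hB (hB₂.const_mul _)]
  refine intervalIntegral.integral_mono_on_of_le_Ioo zero_le_one (hB.sub (hB₂.const_mul _))
    (intervalIntegrable_rpow_mul_one_sub_pow_mul_one_sub_rpow_pow hs n k) fun x ⟨hx0, hx1⟩ => ?_
  have hsplit : x ^ (2 * s - 1) = x ^ (s - 1) * x ^ s := by
    rw [← rpow_add hx0]
    ring_nf
  have hbern := one_sub_mul_le_one_sub_pow (by linarith [rpow_le_one hx0.le hx1.le hs.le]) k
  have hpos : 0 ≤ x ^ (s - 1) * (1 - x) ^ n :=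
    mul_nonneg (rpow_nonneg hx0.le _) (pow_nonneg (by linarith) n)
  rw [hsplit]
  nlinarith [mul_le_mul_of_nonneg_left hbern hpos]

end BetaBounds

theorem tendsto_rpow_mul_integral_mul_one_sub_rpow_pow {ι : Type*} {L : Filter ι} {s : ℝ}
    (hs : 0 < s) {n k : ι → ℕ} (hn : Tendsto n L atTop)
    (hk : Tendsto (fun i => (k i : ℝ) * (n i : ℝ) ^ (-s)) L (nhds 0)) :
    Tendsto (fun i => (n i : ℝ) ^ s *
        ∫ x in (0:ℝ)..1, x ^ (s - 1) * (1 - x) ^ n i * (1 - x ^ s) ^ k i)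
      L (nhds (Gamma s)) := by
  have hB := (tendsto_rpow_mul_integral_rpow_mul_one_sub_pow hs).comp hn
  have hB₂ := (tendsto_rpow_mul_integral_rpow_mul_one_sub_pow (by linarith : 0 < 2 * s)).comp hn
  have hlower := hB.sub (hk.mul hB₂)
  rw [zero_mul, sub_zero] at hlower
  refine tendsto_of_tendsto_of_tendsto_of_le_of_le hlower hB (fun i => ?_) fun i =>
    mul_le_mul_of_nonneg_left (integral_mul_one_sub_rpow_pow_le hs _ _) (by positivity)
  have hpow : (n i : ℝ) ^ s = (n i : ℝ) ^ (-s) * (n i : ℝ) ^ (2 * s) := by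
    rw [← rpow_add' (by positivity) (by linarith)]
    ring_nf
  calc _ = (n i : ℝ) ^ s * ((∫ x in (0:ℝ)..1, x ^ (s - 1) * (1 - x) ^ n i)
        - k i * ∫ x in (0:ℝ)..1, x ^ (2 * s - 1) * (1 - x) ^ n i) := by
          simp only [Function.comp_apply]
          rw [mul_sub, hpow]
          ring
    _ ≤ _ := mul_le_mul_of_nonneg_left
        (integral_sub_mul_integral_le_integral_mul_one_sub_rpow_pow hs _ _) (by positivity)

theorem tendsto_natCast_mul_rpow_neg_of_le_mul {ι : Type*} {L : Filter ι} {s c : ℝ} (hs : 1 < s)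
    {n k : ι → ℕ} (hn : Tendsto n L atTop) (hk : ∀ i, (k i : ℝ) ≤ c * n i) :
    Tendsto (fun i => (k i : ℝ) * (n i : ℝ) ^ (-s)) L (nhds 0) := by
  have hn' : Tendsto (fun i => (n i : ℝ) ^ (-(s - 1))) L (nhds 0) :=
    (tendsto_rpow_neg_atTop (by linarith)).comp (tendsto_natCast_atTop_atTop.comp hn)
  have hupper := hn'.const_mul c
  rw [mul_zero] at hupper
  refine tendsto_of_tendsto_of_tendsto_of_le_of_le tendsto_const_nhds hupper
    (fun i => by positivity) fun i => ?_
  calc (k i : ℝ) * (n i : ℝ) ^ (-s) ≤ c * n i * (n i : ℝ) ^ (-s) :=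
        mul_le_mul_of_nonneg_right (hk i) (by positivity)
    _ = c * (n i : ℝ) ^ (-(s - 1)) := by
        rw [mul_assoc, ← rpow_one_add' (by positivity) (by linarith)]
        ring_nf

theorem stmt_7_general (l : ℝ) (hl : 1 < l) (ν1 ν2 : ℕ) (hν1 : 0 < ν1) :
    Tendsto
      (fun M : ℕ =>
        (∫ x in (0:ℝ)..1,
            x ^ (l - 1) * (1 - x) ^ (ν1 * M) * (1 - x ^ l) ^ (ν2 * M - 1)) *
          (ν1 : ℝ) ^ l * (M : ℝ) ^ l / Real.Gamma l)
      atTop (nhds 1) := by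
  have hn : Tendsto (fun M : ℕ => ν1 * M) atTop atTop :=
    tendsto_id.const_mul_atTop' hν1
  have hk : ∀ M : ℕ, ((ν2 * M - 1 : ℕ) : ℝ) ≤ ν2 * ((ν1 * M : ℕ) : ℝ) := fun M => by
    have : ν2 * M - 1 ≤ ν2 * (ν1 * M) :=
      (Nat.sub_le _ _).trans (Nat.mul_le_mul_left _ (Nat.le_mul_of_pos_left M hν1))
    exact_mod_cast this
  have hlim := (tendsto_rpow_mul_integral_mul_one_sub_rpow_pow (by linarith) hn
    (tendsto_natCast_mul_rpow_neg_of_le_mul hl hn hk)).div_const (Gamma l)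
  rw [div_self (Gamma_pos_of_pos (by linarith)).ne'] at hlim
  refine hlim.congr fun M => ?_
  rw [Nat.cast_mul, mul_rpow (Nat.cast_nonneg _) (Nat.cast_nonneg _)]
  ring

theorem stmt_7 (l : ℝ) (hl : 1 < l) (ν1 ν2 : ℕ) (hν1 : 0 < ν1) (hν2 : 0 < ν2) :
    Tendsto
      (fun M : ℕ =>
        (∫ x in (0:ℝ)..1,
            x ^ (l - 1) * (1 - x) ^ (ν1 * M) * (1 - x ^ l) ^ (ν2 * M - 1)) *
          (ν1 : ℝ) ^ l * (M : ℝ) ^ l / Real.Gamma l)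
      atTop (nhds 1) :=
  stmt_7_general l hl ν1 ν2 hν1
end

section
/- Let S_N be the number of i.i.d. draws needed to collect all N coupons when coupon j has probability q_j > 0 (∑ q_j = 1). For any real r > 0, E[Γ(S_N + r)/Γ(S_N)] = r ∫_0^∞ t^{r−1} [1 − ∏_{j=1}^N (1 − e^{−q_j t})] dt. -/
/-!
Since `Γ(n + r) / Γ(n) = r ∑_{k < n} Γ(r + k) / k!`, summing over tail events gives
`E[Γ(S + r) / Γ(S)] = r ∑_k (Γ(r + k) / k!) P(S > k)`. On the other side
`Γ(r + k) / k! = ∫_0^∞ t^(r-1) e^(-t) t^k / k! dt`, so it remains to identify the Poisson transform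
`∑_k P(S > k) e^(-t) t^k / k!` with `1 - ∏_j (1 - e^(-q_j t))`. By inclusion–exclusion over the set
`J` of coupons not yet drawn, `P(S ≤ k) = ∑_J (-1)^|J| (1 - q_J)^k`, and the Poisson transform of
`(1 - q_J)^k` is `e^(-q_J t)`. Both sides are computed as the same nonnegative series in `ℝ≥0∞`,
so no integrability or summability has to be checked.
-/

open MeasureTheory Real ProbabilityTheory Finset
open scoped ENNReal Nat

-- At `n = 0` both sides vanish: Mathlib's `Gamma 0 = 0` agrees with `1 / Γ` being entire.
lemma Real.inv_Gamma_natCast (n : ℕ) : (Gamma n)⁻¹ = n / n ! := by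
  cases n with
  | zero => simp
  | succ m =>
    rw [Nat.cast_succ, Gamma_nat_eq_factorial, Nat.factorial_succ]
    push_cast
    field_simp

lemma Real.Gamma_natCast_add_div_Gamma_natCast {r : ℝ} (hr : 0 < r) (n : ℕ) :
    Gamma (n + r) / Gamma n = r * ∑ k ∈ range n, Gamma (r + k) / k ! := by
  rw [div_eq_mul_inv, inv_Gamma_natCast]
  induction n with
  | zero => simp
  | succ n ih =>
    have hrec : Gamma (↑(n + 1) + r) = (n + r) * Gamma (n + r) := by
      rw [Nat.cast_succ, add_right_comm, Gamma_add_one (by positivity)]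
    rw [sum_range_succ, mul_add, ← ih, hrec, Nat.factorial_succ, add_comm r]
    push_cast
    field_simp

lemma hasSum_pow_mul_poisson (a t : ℝ) :
    HasSum (fun k : ℕ ↦ a ^ k * (exp (-t) * t ^ k / k !)) (exp ((a - 1) * t)) := by
  have h := (NormedSpace.expSeries_div_hasSum_exp (a * t)).mul_left (exp (-t))
  rw [← exp_eq_exp_ℝ, ← exp_add, show -t + a * t = (a - 1) * t by ring] at h
  have hterm : ∀ k : ℕ, a ^ k * (exp (-t) * t ^ k / k !) = exp (-t) * ((a * t) ^ k / k !) :=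
    fun k ↦ by rw [mul_pow]; ring
  simpa only [hterm] using h

lemma lintegral_rpow_mul_poisson {r : ℝ} (hr : 0 < r) (k : ℕ) :
    ∫⁻ t in Set.Ioi 0, ENNReal.ofReal (t ^ (r - 1) * (exp (-t) * t ^ k / k !))
      = ENNReal.ofReal (Gamma (r + k) / k !) := by
  have hs : 0 < r + k := by positivity
  have hpt : ∀ t ∈ Set.Ioi (0 : ℝ), t ^ (r - 1) * (exp (-t) * t ^ k / k !)
      = (k ! : ℝ)⁻¹ * (exp (-t) * t ^ (r + k - 1)) := by
    intro t ht
    rw [show r + k - 1 = (r - 1) + k by ring, rpow_add ht, rpow_natCast]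
    ring
  rw [setLIntegral_congr_fun measurableSet_Ioi fun t ht ↦ by rw [hpt t ht],
    ← ofReal_integral_eq_lintegral_ofReal ((GammaIntegral_convergent hs).const_mul _)
      ((ae_restrict_iff' measurableSet_Ioi).mpr (ae_of_all _ fun t (ht : 0 < t) ↦ by
        have := rpow_nonneg ht.le (r + k - 1)
        positivity)),
    integral_const_mul, ← Gamma_eq_integral hs, inv_mul_eq_div]

lemma integral_rpow_mul_eq_tsum {r : ℝ} (hr : 0 < r) {p : ℕ → ℝ} (hp : ∀ k, 0 ≤ p k)
    {G : ℝ → ℝ} (hGm : Measurable G)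
    (hG : ∀ t, 0 < t → HasSum (fun k : ℕ ↦ p k * (exp (-t) * t ^ k / k !)) (G t)) :
    ∫ t in Set.Ioi 0, t ^ (r - 1) * G t
      = (∑' k : ℕ, ENNReal.ofReal (Gamma (r + k) / k !) * ENNReal.ofReal (p k)).toReal := by
  have hpt : ∀ t ∈ Set.Ioi (0 : ℝ), ENNReal.ofReal (t ^ (r - 1) * G t)
      = ∑' k : ℕ,
          ENNReal.ofReal (p k) * ENNReal.ofReal (t ^ (r - 1) * (exp (-t) * t ^ k / k !)) := by
    intro t (ht : 0 < t)
    have h := (hG t ht).mul_left (t ^ (r - 1))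
    have := rpow_nonneg ht.le (r - 1)
    rw [← h.tsum_eq, ENNReal.ofReal_tsum_of_nonneg (fun k ↦ by have := hp k; positivity) h.summable]
    refine tsum_congr fun k ↦ ?_
    rw [← ENNReal.ofReal_mul (hp k), mul_left_comm]
  have hnonneg : 0 ≤ᵐ[volume.restrict (Set.Ioi 0)] fun t ↦ t ^ (r - 1) * G t :=
    (ae_restrict_iff' measurableSet_Ioi).mpr (ae_of_all _ fun t (ht : 0 < t) ↦
      mul_nonneg (rpow_nonneg ht.le _) ((hG t ht).nonneg fun k ↦ by have := hp k; positivity))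
  rw [integral_eq_lintegral_of_nonneg_ae hnonneg (by fun_prop),
    setLIntegral_congr_fun measurableSet_Ioi hpt, lintegral_tsum fun k ↦ by fun_prop]
  congr 1
  refine tsum_congr fun k ↦ ?_
  rw [lintegral_const_mul _ (by fun_prop), lintegral_rpow_mul_poisson hr, mul_comm]

section

variable {Ω ι : Type*}

lemma Finset.prod_one_sub_eq_sum_powerset {R : Type*} [CommRing R] [Fintype ι] (x : ι → R) :
    ∏ i, (1 - x i) = ∑ J ∈ univ.powerset, (-1) ^ #J * ∏ i ∈ J, x i := by
  classical
  simp [prod_sub]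

lemma hasSum_sum_powerset_mul_poisson [Fintype ι] (q : ι → ℝ) (t : ℝ) :
    HasSum (fun k : ℕ ↦ (∑ J ∈ univ.powerset, (-1) ^ #J * (1 - ∑ j ∈ J, q j) ^ k)
        * (exp (-t) * t ^ k / k !))
      (∏ j, (1 - exp (-q j * t))) := by
  have hexp : ∀ J : Finset ι, ∏ j ∈ J, exp (-q j * t) = exp ((1 - ∑ j ∈ J, q j - 1) * t) := by
    intro J
    rw [← exp_sum, ← sum_mul, sum_neg_distrib]
    ring_nf
  simp_rw [prod_one_sub_eq_sum_powerset, hexp, sum_mul, mul_assoc]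
  exact hasSum_sum fun J _ ↦ (hasSum_pow_mul_poisson _ t).mul_left _

lemma Set.prod_indicator_one_apply {R : Type*} [CommSemiring R] (A : ι → Set Ω) (J : Finset ι)
    (ω : Ω) : ∏ i ∈ J, (A i).indicator (1 : Ω → R) ω = (⋂ i ∈ J, A i).indicator 1 ω := by
  simp [prod_indicator_apply]

lemma Nat.sInf_le_iff_of_monotone {P : ℕ → Prop} (hP : Monotone P) (k : ℕ) :
    sInf {n | P n} ≤ k ↔ P k ∨ ∀ n, ¬ P n := by
  classical
  by_cases h : ∃ n, P n
  · rw [Nat.sInf_def (s := {n | P n}) h, Nat.find_le_iff]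
    simp only [not_forall_not.mpr h, or_false]
    exact ⟨fun ⟨m, hmk, hm⟩ ↦ hP hmk hm, fun hk ↦ ⟨k, le_rfl, hk⟩⟩
  · simp only [not_exists] at h
    simp [h]

def allCollected (X : ℕ → Ω → ι) (n : ℕ) : Set Ω := {ω | ∀ j, ∃ i < n, X i ω = j}

lemma allCollected_mono (X : ℕ → Ω → ι) (ω : Ω) : Monotone fun n ↦ ω ∈ allCollected X n :=
  fun _ _ hmn hω j ↦ (hω j).imp fun _ ⟨hi, hX⟩ ↦ ⟨hi.trans_le hmn, hX⟩

-- If some coupon is never drawn, the set below is empty and `sInf ∅ = 0`.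
lemma setOf_le_eq_allCollected_union {X : ℕ → Ω → ι} {S : Ω → ℕ}
    (hS : ∀ ω, S ω = sInf {n | ω ∈ allCollected X n}) (k : ℕ) :
    {ω | S ω ≤ k} = allCollected X k ∪ ⋂ n, (allCollected X n)ᶜ := by
  ext ω
  simp only [Set.mem_ofPred_eq, hS, Set.mem_union, Set.mem_iInter, Set.mem_compl_iff]
  exact Nat.sInf_le_iff_of_monotone (allCollected_mono X ω) k

lemma iInter_compl_allCollected_subset [Fintype ι] (X : ℕ → Ω → ι) :
    ⋂ n, (allCollected X n)ᶜ ⊆ ⋃ j, {ω | ∀ i, X i ω ≠ j} := by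
  intro ω hω
  by_contra h
  simp only [Set.mem_iUnion, Set.mem_ofPred_eq, not_exists, not_forall, not_not] at h
  choose f hf using h
  exact Set.mem_iInter.mp hω (univ.sup f + 1)
    fun j ↦ ⟨f j, Nat.lt_succ_of_le (le_sup (mem_univ j)), hf j⟩

variable [MeasurableSpace Ω] {μ : Measure Ω}

lemma lintegral_sum_range_eq_tsum_mul_measure_lt {S : Ω → ℕ} (hS : Measurable S) (a : ℕ → ℝ≥0∞) :
    ∫⁻ ω, ∑ k ∈ range (S ω), a k ∂μ = ∑' k, a k * μ {ω | k < S ω} := by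
  have hind : ∀ ω, ∑ k ∈ range (S ω), a k = ∑' k, {ω | k < S ω}.indicator (fun _ ↦ a k) ω := by
    intro ω
    rw [sum_eq_tsum_indicator]
    congr! 2 with k
    simp [Set.indicator_apply]
  have hmeas : ∀ k, MeasurableSet {ω | k < S ω} := fun k ↦ measurableSet_lt measurable_const hS
  simp_rw [hind]
  rw [lintegral_tsum fun k ↦ (measurable_const.indicator (hmeas k)).aemeasurable]
  simp_rw [lintegral_indicator_const (hmeas _)]

lemma integral_Gamma_add_div_Gamma {S : Ω → ℕ} (hS : Measurable S) {r : ℝ} (hr : 0 < r) :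
    ∫ ω, Gamma (S ω + r) / Gamma (S ω) ∂μ
      = r * (∑' k : ℕ, ENNReal.ofReal (Gamma (r + k) / k !) * μ {ω | k < S ω}).toReal := by
  have hcoef : ∀ k : ℕ, 0 ≤ Gamma (r + k) / k ! := fun k ↦
    div_nonneg (Gamma_pos_of_pos (by positivity)).le (Nat.cast_nonneg _)
  have hsplit : ∀ n : ℕ, ENNReal.ofReal (Gamma (n + r) / Gamma n)
      = ENNReal.ofReal r * ∑ k ∈ range n, ENNReal.ofReal (Gamma (r + k) / k !) := by
    intro n
    rw [Gamma_natCast_add_div_Gamma_natCast hr, ENNReal.ofReal_mul hr.le,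
      ENNReal.ofReal_sum_of_nonneg fun k _ ↦ hcoef k]
  have hnonneg : ∀ n : ℕ, 0 ≤ Gamma (n + r) / Gamma n := fun n ↦ by
    rw [Gamma_natCast_add_div_Gamma_natCast hr]
    exact mul_nonneg hr.le (sum_nonneg fun k _ ↦ hcoef k)
  rw [integral_eq_lintegral_of_nonneg_ae (ae_of_all _ fun ω ↦ hnonneg (S ω))
      ((measurable_from_top (f := fun n : ℕ ↦ Gamma (n + r) / Gamma n)).comp
        hS).aestronglyMeasurable,
    lintegral_congr fun ω ↦ hsplit (S ω), lintegral_const_mul' _ _ ENNReal.ofReal_ne_top,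
    lintegral_sum_range_eq_tsum_mul_measure_lt hS, ENNReal.toReal_mul, ENNReal.toReal_ofReal hr.le]

lemma measureReal_iInter_eq_sum_powerset [Fintype ι] [IsFiniteMeasure μ] {A : ι → Set Ω}
    (hA : ∀ i, MeasurableSet (A i)) :
    μ.real (⋂ i, A i) = ∑ J ∈ univ.powerset, (-1) ^ #J * μ.real (⋂ i ∈ J, (A i)ᶜ) := by
  have hind : ∀ ω, (⋂ i, A i).indicator (1 : Ω → ℝ) ω
      = ∑ J ∈ univ.powerset, (-1) ^ #J * (⋂ i ∈ J, (A i)ᶜ).indicator 1 ω := by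
    intro ω
    have hcompl : ∀ i, (A i).indicator (1 : Ω → ℝ) ω = 1 - (A i)ᶜ.indicator 1 ω := fun i ↦ by
      simp [Set.indicator_compl]
    simp_rw [← Set.prod_indicator_one_apply, ← prod_one_sub_eq_sum_powerset, ← hcompl]
    simp [Set.prod_indicator_one_apply]
  have hmeas : ∀ J : Finset ι, MeasurableSet (⋂ i ∈ J, (A i)ᶜ) := fun J ↦
    J.measurableSet_biInter fun i _ ↦ (hA i).compl
  rw [← integral_indicator_one (MeasurableSet.iInter hA), integral_congr_ae (ae_of_all _ hind),
    integral_finsetSum _ fun J _ ↦ ((integrable_const 1).indicator (hmeas J)).const_mul _]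
  simp_rw [integral_const_mul, integral_indicator_one (hmeas _)]

lemma ProbabilityTheory.iIndepFun.measure_forall_lt_mem {β : Type*} [MeasurableSpace β]
    {X : ℕ → Ω → β} (hind : iIndepFun X μ) {s : Set β} (hs : MeasurableSet s) {a : ℝ≥0∞}
    (ha : ∀ i, μ (X i ⁻¹' s) = a) (k : ℕ) :
    μ {ω | ∀ i < k, X i ω ∈ s} = a ^ k := by
  have hset : {ω | ∀ i < k, X i ω ∈ s} = ⋂ i ∈ range k, X i ⁻¹' s := by ext; simp
  rw [hset, hind.measure_inter_preimage_eq_mul _ fun _ _ ↦ hs]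
  simp [ha]

section CouponCollector

variable [MeasurableSpace ι] [MeasurableSingletonClass ι] {q : ι → ℝ}

lemma measure_preimage_compl_finset [IsProbabilityMeasure μ] {Y : Ω → ι} (hY : Measurable Y)
    (hq : ∀ j, 0 ≤ q j) (hdist : ∀ j, μ {ω | Y ω = j} = ENNReal.ofReal (q j)) (J : Finset ι) :
    μ (Y ⁻¹' (↑J)ᶜ) = ENNReal.ofReal (1 - ∑ j ∈ J, q j) := by
  have hJ : μ (Y ⁻¹' ↑J) = ∑ j ∈ J, ENNReal.ofReal (q j) := by
    rw [← Measure.map_apply hY J.measurableSet, ← sum_measure_singleton]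
    simp_rw [Measure.map_apply hY (measurableSet_singleton _)]
    exact sum_congr rfl fun j _ ↦ hdist j
  rw [Set.preimage_compl, measure_compl (hY J.measurableSet) (measure_ne_top _ _), measure_univ, hJ,
    ← ENNReal.ofReal_sum_of_nonneg fun j _ ↦ hq j, ENNReal.ofReal_sub _ (sum_nonneg fun j _ ↦ hq j),
    ENNReal.ofReal_one]

variable [IsProbabilityMeasure μ] {X : ℕ → Ω → ι} (hX : ∀ i, Measurable (X i))
  (hind : iIndepFun X μ) (hdist : ∀ i j, μ {ω | X i ω = j} = ENNReal.ofReal (q j))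
include hX hind hdist

lemma measure_forall_ne_eq_zero (hq : ∀ j, 0 < q j) (j : ι) : μ {ω | ∀ i, X i ω ≠ j} = 0 := by
  have hmiss : ∀ i, μ (X i ⁻¹' {j}ᶜ) = ENNReal.ofReal (1 - q j) := fun i ↦ by
    simpa using measure_preimage_compl_finset (hX i) (fun j ↦ (hq j).le) (hdist i) {j}
  have hsub : ∀ k, {ω | ∀ i, X i ω ≠ j} ⊆ {ω | ∀ i < k, X i ω ∈ ({j} : Set ι)ᶜ} :=
    fun _ _ hω i _ ↦ hω i
  have hle : ∀ k, μ {ω | ∀ i, X i ω ≠ j} ≤ ENNReal.ofReal (1 - q j) ^ k := fun k ↦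
    (measure_mono (hsub k)).trans_eq
      (hind.measure_forall_lt_mem (measurableSet_singleton j).compl hmiss k)
  exact nonpos_iff_eq_zero.mp (ge_of_tendsto' (ENNReal.tendsto_pow_atTop_nhds_zero_of_lt_one
    (ENNReal.ofReal_lt_one.mpr (by linarith [hq j]))) hle)

variable [Fintype ι]

lemma measure_iInter_compl_allCollected (hq : ∀ j, 0 < q j) :
    μ (⋂ n, (allCollected X n)ᶜ) = 0 :=
  measure_mono_null (iInter_compl_allCollected_subset X)
    (measure_iUnion_null (measure_forall_ne_eq_zero hX hind hdist hq))

omit hind hdist in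
lemma measurableSet_allCollected (n : ℕ) : MeasurableSet (allCollected X n) := by
  simp only [allCollected, Set.ofPred_forall, Set.ofPred_exists]
  measurability

lemma measureReal_allCollected (hq : ∀ j, 0 ≤ q j) (hsum : ∑ j, q j = 1) (k : ℕ) :
    μ.real (allCollected X k) = ∑ J ∈ univ.powerset, (-1) ^ #J * (1 - ∑ j ∈ J, q j) ^ k := by
  have hinter : allCollected X k = ⋂ j, {ω | ∃ i < k, X i ω = j} := by
    ext; simp [allCollected]
  have hmiss : ∀ J : Finset ι,
      ⋂ j ∈ J, {ω | ∃ i < k, X i ω = j}ᶜ = {ω | ∀ i < k, X i ω ∈ (↑J : Set ι)ᶜ} := by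
    intro J
    ext ω
    simp only [Set.mem_iInter, Set.mem_compl_iff, Set.mem_ofPred_eq, not_exists, not_and, mem_coe]
    exact ⟨fun h i hi hiJ ↦ h _ hiJ i hi rfl, fun h j hj i hi hij ↦ h i hi (hij ▸ hj)⟩
  have hqJ : ∀ J : Finset ι, 0 ≤ 1 - ∑ j ∈ J, q j := fun J ↦ by
    rw [sub_nonneg, ← hsum]
    exact sum_le_univ_sum_of_nonneg hq
  rw [hinter, measureReal_iInter_eq_sum_powerset fun j ↦ ?_]
  · refine sum_congr rfl fun J _ ↦ ?_
    rw [hmiss, measureReal_def, hind.measure_forall_lt_mem J.measurableSet.compl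
      (fun i ↦ measure_preimage_compl_finset (hX i) hq (hdist i) J), ← ENNReal.ofReal_pow (hqJ J),
      ENNReal.toReal_ofReal (pow_nonneg (hqJ J) k)]
  · simp only [Set.ofPred_exists]
    measurability

variable {S : Ω → ℕ} (hS : ∀ ω, S ω = sInf {n | ω ∈ allCollected X n})
include hS

omit hind hdist in
lemma measurable_collectionTime : Measurable S :=
  measurable_of_Iic fun k ↦ by
    change MeasurableSet {ω | S ω ≤ k}
    rw [setOf_le_eq_allCollected_union hS]
    exact (measurableSet_allCollected hX k).union
      (MeasurableSet.iInter fun n ↦ (measurableSet_allCollected hX n).compl)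

lemma measureReal_lt_collectionTime (hq : ∀ j, 0 < q j) (hsum : ∑ j, q j = 1) (k : ℕ) :
    μ.real {ω | k < S ω}
      = 1 - ∑ J ∈ univ.powerset, (-1) ^ #J * (1 - ∑ j ∈ J, q j) ^ k := by
  have hnull : (allCollected X k ∪ ⋂ n, (allCollected X n)ᶜ : Set Ω) =ᵐ[μ] allCollected X k :=
    union_ae_eq_left_of_ae_eq_empty
      (ae_eq_empty.mpr (measure_iInter_compl_allCollected hX hind hdist hq))
  rw [show {ω | k < S ω} = {ω | S ω ≤ k}ᶜ by ext; simp,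
    probReal_compl_eq_one_sub (measurableSet_le (measurable_collectionTime hX hS) measurable_const),
    setOf_le_eq_allCollected_union hS, measureReal_congr hnull,
    measureReal_allCollected hX hind hdist (fun j ↦ (hq j).le) hsum]

end CouponCollector

end

theorem stmt_9_general {Ω : Type*} [MeasurableSpace Ω] (μ : Measure Ω) [IsProbabilityMeasure μ]
    (N : ℕ) (q : Fin N → ℝ) (hq : ∀ j, 0 < q j)
    (hsum : ∑ j, q j = 1)
    (X : ℕ → Ω → Fin N) (hXmeas : ∀ i, Measurable (X i))
    (hindep : iIndepFun X μ)
    (hdist : ∀ i j, μ {ω | X i ω = j} = ENNReal.ofReal (q j))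
    (S : Ω → ℕ) (hS : ∀ ω, S ω = sInf {n : ℕ | ∀ j, ∃ i < n, X i ω = j})
    (r : ℝ) (hr : 0 < r) :
    ∫ ω, Real.Gamma ((S ω : ℝ) + r) / Real.Gamma (S ω) ∂μ
      = r * ∫ t in Set.Ioi (0:ℝ),
          t ^ (r - 1) * (1 - ∏ j, (1 - Real.exp (-q j * t))) := by
  have hpoisson : ∀ t, HasSum (fun k : ℕ ↦ μ.real {ω | k < S ω} * (exp (-t) * t ^ k / k !))
      (1 - ∏ j, (1 - exp (-q j * t))) := by
    intro t
    have hweights : HasSum (fun k : ℕ ↦ exp (-t) * t ^ k / k !) 1 := by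
      simpa using hasSum_pow_mul_poisson 1 t
    simp_rw [measureReal_lt_collectionTime hXmeas hindep hdist hS hq hsum, sub_mul, one_mul]
    exact hweights.sub (hasSum_sum_powerset_mul_poisson q t)
  rw [integral_Gamma_add_div_Gamma (measurable_collectionTime hXmeas hS) hr,
    integral_rpow_mul_eq_tsum hr (fun _ ↦ measureReal_nonneg) (by fun_prop) fun t _ ↦ hpoisson t]
  simp_rw [ofReal_measureReal (measure_ne_top μ _)]

theorem stmt_9 {Ω : Type*} [MeasurableSpace Ω] (μ : Measure Ω) [IsProbabilityMeasure μ]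
    (N : ℕ) (hN : 0 < N) (q : Fin N → ℝ) (hq : ∀ j, 0 < q j)
    (hsum : ∑ j, q j = 1)
    (X : ℕ → Ω → Fin N) (hXmeas : ∀ i, Measurable (X i))
    (hindep : iIndepFun X μ)
    (hdist : ∀ i j, μ {ω | X i ω = j} = ENNReal.ofReal (q j))
    (S : Ω → ℕ) (hS : ∀ ω, S ω = sInf {n : ℕ | ∀ j, ∃ i < n, X i ω = j})
    (r : ℝ) (hr : 0 < r) :
    ∫ ω, Real.Gamma ((S ω : ℝ) + r) / Real.Gamma (S ω) ∂μ
      = r * ∫ t in Set.Ioi (0:ℝ),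
          t ^ (r - 1) * (1 - ∏ j, (1 - Real.exp (-q j * t))) :=
  stmt_9_general μ N q hq hsum X hXmeas hindep hdist S hS r hr
end

section
/- Let S_N be the coupon collector waiting time with coupon probabilities q_1,...,q_N > 0 summing to 1. Then E[S_N (S_N + 1)] = 2 ∫_0^∞ t [1 − ∏_{j=1}^N (1 − e^{−q_j t})] dt. -/
/-!
Both sides equal `2 ∑_{∅ ≠ u} (-1)^(|u|+1) / q(u)^2`, where `q(u) = ∑_{j ∈ u} q j`.
On the left, `E[S(S+1)] = ∑_n 2(n+1) P(S > n)`, and inclusion–exclusion over the coupons still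
missing after `n` draws gives `P(S > n) = ∑_{∅ ≠ u} (-1)^(|u|+1) (1 - q(u))^n`; then use
`∑_n (n+1) r^n = (1-r)^(-2)`. On the right, the same expansion turns `1 - ∏_j (1 - e^(-q_j t))`
into `∑_{∅ ≠ u} (-1)^(|u|+1) e^(-q(u) t)`, and `∫_0^∞ t e^(-a t) dt = a^(-2)`.
-/

open MeasureTheory Real ProbabilityTheory Finset Filter Topology
open scoped ENNReal

theorem Finset.one_sub_prod_one_sub {ι R : Type*} [CommRing R] (s : Finset ι) (f : ι → R) :
    1 - ∏ i ∈ s, (1 - f i) = ∑ t ∈ s.powerset with t.Nonempty, (-1) ^ (#t + 1) * ∏ i ∈ t, f i := by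
  classical
  have hsplit := sum_filter_add_sum_filter_not s.powerset (·.Nonempty)
    (fun t => (-1 : R) ^ #t * ∏ i ∈ t, f i)
  have hempty : {t ∈ s.powerset | ¬ t.Nonempty} = {∅} := by
    ext t; simp +contextual [Finset.not_nonempty_iff_eq_empty]
  rw [hempty, sum_singleton] at hsplit
  simp only [prod_sub, prod_const_one, mul_one, ← hsplit, card_empty, pow_zero, prod_empty,
    pow_succ, mul_neg_one, neg_mul, sum_neg_distrib]
  ring

theorem hasSum_succ_mul_pow {r : ℝ} (hr : |r| < 1) :
    HasSum (fun n : ℕ => ((n : ℝ) + 1) * r ^ n) (1 / (1 - r) ^ 2) := by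
  simpa using hasSum_choose_mul_geometric_of_norm_lt_one (𝕜 := ℝ) 1 hr

theorem integral_mul_exp_neg_mul_Ioi {Q : ℝ} (hQ : 0 < Q) :
    ∫ t in Set.Ioi 0, t * exp (-(Q * t)) = 1 / Q ^ 2 := by
  have h := integral_rpow_mul_exp_neg_mul_Ioi two_pos hQ
  norm_num [Real.Gamma_two] at h
  simpa using h

theorem integrableOn_mul_exp_neg_mul_Ioi {Q : ℝ} (hQ : 0 < Q) :
    IntegrableOn (fun t => t * exp (-(Q * t))) (Set.Ioi 0) := by
  simpa using integrableOn_rpow_mul_exp_neg_mul_rpow (p := 1) (s := 1) (by norm_num) one_pos hQ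

theorem integral_mul_one_sub_prod_one_sub_exp {ι : Type*} [Fintype ι] {q : ι → ℝ}
    (hq : ∀ j, 0 < q j) :
    ∫ t in Set.Ioi 0, t * (1 - ∏ j, (1 - exp (-q j * t))) =
      ∑ u ∈ univ.powerset with u.Nonempty, (-1) ^ (#u + 1) * (1 / (∑ j ∈ u, q j) ^ 2) := by
  have hQ : ∀ u ∈ univ.powerset.filter (·.Nonempty), 0 < ∑ j ∈ u, q j :=
    fun u hu => sum_pos (fun j _ => hq j) (mem_filter.1 hu).2
  have hexpand : ∀ t, t * (1 - ∏ j, (1 - exp (-q j * t))) = ∑ u ∈ univ.powerset with u.Nonempty,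
      (-1) ^ (#u + 1) * (t * exp (-((∑ j ∈ u, q j) * t))) := by
    intro t
    rw [one_sub_prod_one_sub, mul_sum]
    refine sum_congr rfl fun u _ => ?_
    rw [← exp_sum, sum_mul, ← sum_neg_distrib]
    simp only [neg_mul]
    ring
  simp_rw [hexpand]
  rw [integral_finsetSum _ fun u hu => (integrableOn_mul_exp_neg_mul_Ioi (hQ u hu)).const_mul _]
  refine sum_congr rfl fun u hu => ?_
  rw [integral_const_mul, integral_mul_exp_neg_mul_Ioi (hQ u hu)]

section TailSum

variable {Ω : Type*} [MeasurableSpace Ω] {μ : Measure Ω} {S : Ω → ℕ}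

theorem lintegral_sum_range_eq_tsum (hS : Measurable S) (g : ℕ → ℝ≥0∞) :
    ∫⁻ ω, ∑ n ∈ range (S ω), g n ∂μ = ∑' n, g n * μ {ω | n < S ω} := by
  have hmeas (n : ℕ) : MeasurableSet {ω | n < S ω} := measurableSet_lt measurable_const hS
  have hind (ω : Ω) : ∑ n ∈ range (S ω), g n = ∑' n, {ω | n < S ω}.indicator (fun _ => g n) ω := by
    rw [tsum_eq_sum (s := range (S ω)) fun n hn => Set.indicator_of_notMem (by simpa using hn) _]
    exact sum_congr rfl fun n hn =>
      (Set.indicator_of_mem (s := {ω | n < S ω}) (mem_range.1 hn) fun _ => g n).symm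
  simp_rw [hind]
  rw [lintegral_tsum fun n => (measurable_const.indicator (hmeas n)).aemeasurable]
  simp_rw [lintegral_indicator_const (hmeas _)]

theorem sum_range_two_mul_succ (s : ℕ) : ∑ n ∈ range s, 2 * ((n : ℝ) + 1) = s * (s + 1) := by
  induction s with
  | zero => simp
  | succ k ih => rw [sum_range_succ, ih]; push_cast; ring

theorem integral_mul_succ_eq_of_hasSum [IsFiniteMeasure μ] (hS : Measurable S) {a : ℝ}
    (ha : HasSum (fun n : ℕ => 2 * ((n : ℝ) + 1) * μ.real {ω | n < S ω}) a) :
    ∫ ω, (S ω : ℝ) * (S ω + 1) ∂μ = a := by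
  have hnonneg : 0 ≤ᵐ[μ] fun ω => (S ω : ℝ) * (S ω + 1) := ae_of_all _ fun ω => by positivity
  have hofReal (ω : Ω) : ENNReal.ofReal ((S ω : ℝ) * (S ω + 1))
      = ∑ n ∈ range (S ω), ENNReal.ofReal (2 * ((n : ℝ) + 1)) := by
    rw [← sum_range_two_mul_succ, ENNReal.ofReal_sum_of_nonneg fun n _ => by positivity]
  have hterm (n : ℕ) : ENNReal.ofReal (2 * ((n : ℝ) + 1)) * μ {ω | n < S ω}
      = ENNReal.ofReal (2 * ((n : ℝ) + 1) * μ.real {ω | n < S ω}) := by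
    rw [ENNReal.ofReal_mul (by positivity : (0 : ℝ) ≤ 2 * (n + 1)), ofReal_measureReal]
  have hmeas : Measurable fun ω => (S ω : ℝ) * (S ω + 1) :=
    (measurable_from_nat (f := fun s : ℕ => (s : ℝ) * (s + 1))).comp hS
  rw [integral_eq_lintegral_of_nonneg_ae hnonneg hmeas.aestronglyMeasurable,
    lintegral_congr hofReal, lintegral_sum_range_eq_tsum hS, tsum_congr hterm,
    ← ENNReal.ofReal_tsum_of_nonneg (fun n => by positivity) ha.summable, ha.tsum_eq,
    ENNReal.toReal_ofReal (ha.nonneg fun n => by positivity)]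

end TailSum

theorem Nat.lt_sInf_iff_of_monotone {P : ℕ → Prop} (hP : Monotone P) {n : ℕ} :
    n < sInf {m | P m} ↔ ¬ P n ∧ ∃ m, P m := by
  constructor
  · intro h
    refine ⟨fun hn => (Nat.sInf_le hn).not_gt h, ?_⟩
    by_contra! hnone
    simp [hnone] at h
  · rintro ⟨hn, hex⟩
    by_contra! hle
    exact hn (hP hle (Nat.sInf_mem hex))

section CouponCollector

variable {Ω ι : Type*} {X : ℕ → Ω → ι}

def collected (X : ℕ → Ω → ι) (n : ℕ) : Set Ω := {ω | ∀ j, ∃ i < n, X i ω = j}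

theorem collected_mono (X : ℕ → Ω → ι) : Monotone (collected X) :=
  fun _ _ hmm' _ hω j => (hω j).imp fun _ hi => ⟨hi.1.trans_le hmm', hi.2⟩

theorem compl_collected [Fintype ι] (X : ℕ → Ω → ι) (n : ℕ) :
    (collected X n)ᶜ = ⋃ j ∈ (univ : Finset ι), {ω | ∀ i < n, X i ω ≠ j} := by
  ext ω
  simp [collected]

theorem biInter_setOf_forall_ne (X : ℕ → Ω → ι) (n : ℕ) (u : Finset ι) :
    ⋂ j ∈ u, {ω | ∀ i < n, X i ω ≠ j} = ⋂ i ∈ range n, X i ⁻¹' (↑u)ᶜ := by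
  ext ω
  simp only [Set.mem_iInter, Set.mem_ofPred_eq, mem_range, Set.mem_preimage, Set.mem_compl_iff,
    mem_coe]
  exact ⟨fun h i hi hmem => h _ hmem i hi rfl, fun h j hj i hi heq => h i hi (heq ▸ hj)⟩

-- `sInf ∅ = 0`: on the null event that some coupon never shows up, `S = 0`.
theorem setOf_lt_eq_compl_collected_inter {S : Ω → ℕ}
    (hS : ∀ ω, S ω = sInf {n | ∀ j, ∃ i < n, X i ω = j}) (n : ℕ) :
    {ω | n < S ω} = (collected X n)ᶜ ∩ ⋃ m, collected X m := by
  ext ω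
  simp only [hS, Set.mem_inter_iff, Set.mem_compl_iff, Set.mem_iUnion]
  exact Nat.lt_sInf_iff_of_monotone fun m m' h hω => collected_mono X h hω

variable [MeasurableSpace Ω] {μ : Measure Ω} [MeasurableSpace ι] [MeasurableSingletonClass ι]

theorem measurableSet_collected [Countable ι] (hX : ∀ i, Measurable (X i)) (n : ℕ) :
    MeasurableSet (collected X n) := by
  have : collected X n = ⋂ j, ⋃ i ∈ range n, X i ⁻¹' {j} := by ext; simp [collected]
  rw [this]
  exact .iInter fun j => .biUnion (Set.to_countable _) fun i _ => hX i (measurableSet_singleton j)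

theorem measureReal_preimage_compl_finset [IsProbabilityMeasure μ] {Y : Ω → ι} (hY : Measurable Y)
    {q : ι → ℝ} (hlaw : ∀ j, μ.real {ω | Y ω = j} = q j) (u : Finset ι) :
    μ.real (Y ⁻¹' (↑u)ᶜ) = 1 - ∑ j ∈ u, q j := by
  rw [Set.preimage_compl, probReal_compl_eq_one_sub (hY u.measurableSet),
    ← sum_measureReal_preimage_singleton u fun j _ => hY (measurableSet_singleton j)]
  simp only [Set.preimage, Set.mem_singleton_iff, hlaw]

theorem sum_le_one_of_measureReal_eq [IsProbabilityMeasure μ] {Y : Ω → ι} (hY : Measurable Y)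
    {q : ι → ℝ} (hlaw : ∀ j, μ.real {ω | Y ω = j} = q j) (u : Finset ι) :
    ∑ j ∈ u, q j ≤ 1 := by
  have := measureReal_preimage_compl_finset hY hlaw u ▸ measureReal_nonneg
  linarith

variable [Fintype ι] [IsProbabilityMeasure μ] {q : ι → ℝ}

theorem measureReal_compl_collected (hX : ∀ i, Measurable (X i)) (hindep : iIndepFun X μ)
    (hlaw : ∀ i j, μ.real {ω | X i ω = j} = q j) (n : ℕ) :
    μ.real (collected X n)ᶜ
      = ∑ u ∈ univ.powerset with u.Nonempty, (-1) ^ (#u + 1) * (1 - ∑ j ∈ u, q j) ^ n := by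
  have hmissing (j : ι) : MeasurableSet {ω | ∀ i < n, X i ω ≠ j} := by
    have : {ω | ∀ i < n, X i ω ≠ j} = ⋂ i ∈ range n, (X i ⁻¹' {j})ᶜ := by ext; simp
    rw [this]
    exact .biInter (Set.to_countable _) fun i _ => (hX i (measurableSet_singleton j)).compl
  rw [compl_collected, measureReal_biUnion_eq_sum_powerset fun j _ => hmissing j]
  refine sum_congr rfl fun u _ => ?_
  rw [biInter_setOf_forall_ne, measureReal_def,
    hindep.meas_biInter fun i _ => ⟨(↑u)ᶜ, u.measurableSet.compl, rfl⟩, ENNReal.toReal_prod]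
  simp only [← measureReal_def, measureReal_preimage_compl_finset (hX _) (hlaw _), prod_const,
    card_range]

theorem measure_compl_iUnion_collected (hX : ∀ i, Measurable (X i)) (hindep : iIndepFun X μ)
    (hlaw : ∀ i j, μ.real {ω | X i ω = j} = q j) (hq : ∀ j, 0 < q j) :
    μ (⋃ n, collected X n)ᶜ = 0 := by
  have htendsto : Tendsto (fun n => μ.real (collected X n)ᶜ) atTop (𝓝 0) := by
    simp_rw [measureReal_compl_collected hX hindep hlaw]
    have := tendsto_finsetSum (univ.powerset.filter (·.Nonempty)) fun u hu =>
      (tendsto_pow_atTop_nhds_zero_of_lt_one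
        (sub_nonneg.2 (sum_le_one_of_measureReal_eq (hX 0) (hlaw 0) u))
        (sub_lt_self _ (sum_pos (fun j _ => hq j) (mem_filter.1 hu).2))).const_mul
      ((-1 : ℝ) ^ (#u + 1))
    simpa using this
  rw [← measureReal_eq_zero_iff]
  refine le_antisymm (ge_of_tendsto' htendsto fun n => ?_) measureReal_nonneg
  exact measureReal_mono (Set.compl_subset_compl.2 (Set.subset_iUnion _ n))

variable {S : Ω → ℕ}

theorem measurable_of_eq_sInf_collected (hX : ∀ i, Measurable (X i))
    (hS : ∀ ω, S ω = sInf {n | ∀ j, ∃ i < n, X i ω = j}) : Measurable S :=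
  measurable_of_Ioi fun n => by
    change MeasurableSet {ω | n < S ω}
    rw [setOf_lt_eq_compl_collected_inter hS]
    exact (measurableSet_collected hX n).compl.inter (.iUnion (measurableSet_collected hX))

theorem measureReal_lt_of_eq_sInf_collected (hX : ∀ i, Measurable (X i))
    (hindep : iIndepFun X μ) (hlaw : ∀ i j, μ.real {ω | X i ω = j} = q j) (hq : ∀ j, 0 < q j)
    (hS : ∀ ω, S ω = sInf {n | ∀ j, ∃ i < n, X i ω = j}) (n : ℕ) :
    μ.real {ω | n < S ω}
      = ∑ u ∈ univ.powerset with u.Nonempty, (-1) ^ (#u + 1) * (1 - ∑ j ∈ u, q j) ^ n := by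
  rw [setOf_lt_eq_compl_collected_inter hS, measureReal_def,
    measure_inter_conull (measure_compl_iUnion_collected hX hindep hlaw hq), ← measureReal_def,
    measureReal_compl_collected hX hindep hlaw]

theorem hasSum_two_mul_succ_mul_measureReal_lt (hX : ∀ i, Measurable (X i))
    (hindep : iIndepFun X μ) (hlaw : ∀ i j, μ.real {ω | X i ω = j} = q j) (hq : ∀ j, 0 < q j)
    (hS : ∀ ω, S ω = sInf {n | ∀ j, ∃ i < n, X i ω = j}) :
    HasSum (fun n : ℕ => 2 * ((n : ℝ) + 1) * μ.real {ω | n < S ω})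
      (2 * ∑ u ∈ univ.powerset with u.Nonempty, (-1) ^ (#u + 1) * (1 / (∑ j ∈ u, q j) ^ 2)) := by
  simp_rw [measureReal_lt_of_eq_sInf_collected hX hindep hlaw hq hS, mul_sum]
  refine hasSum_sum fun u hu => ?_
  have hpos : 0 < ∑ j ∈ u, q j := sum_pos (fun j _ => hq j) (mem_filter.1 hu).2
  have hle : ∑ j ∈ u, q j ≤ 1 := sum_le_one_of_measureReal_eq (hX 0) (hlaw 0) u
  have := hasSum_succ_mul_pow (abs_lt.2 ⟨by linarith, by linarith⟩ : |1 - ∑ j ∈ u, q j| < 1)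
  rw [sub_sub_cancel] at this
  rw [← mul_assoc]
  exact (this.mul_left (2 * (-1) ^ (#u + 1))).congr_fun fun n => by ring

end CouponCollector

theorem stmt_11_general {Ω : Type*} [MeasurableSpace Ω] (μ : Measure Ω) [IsProbabilityMeasure μ]
    (N : ℕ) (q : Fin N → ℝ) (hq : ∀ j, 0 < q j)
    (X : ℕ → Ω → Fin N) (hXmeas : ∀ i, Measurable (X i))
    (hindep : iIndepFun X μ)
    (hdist : ∀ i j, μ {ω | X i ω = j} = ENNReal.ofReal (q j))
    (S : Ω → ℕ) (hS : ∀ ω, S ω = sInf {n : ℕ | ∀ j, ∃ i < n, X i ω = j}) :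
    ∫ ω, (S ω : ℝ) * ((S ω : ℝ) + 1) ∂μ
      = 2 * ∫ t in Set.Ioi (0:ℝ), t * (1 - ∏ j, (1 - Real.exp (-q j * t))) := by
  have hlaw : ∀ i j, μ.real {ω | X i ω = j} = q j := fun i j => by
    rw [measureReal_def, hdist, ENNReal.toReal_ofReal (hq j).le]
  rw [integral_mul_succ_eq_of_hasSum (measurable_of_eq_sInf_collected hXmeas hS)
      (hasSum_two_mul_succ_mul_measureReal_lt hXmeas hindep hlaw hq hS),
    integral_mul_one_sub_prod_one_sub_exp hq]

theorem stmt_11 {Ω : Type*} [MeasurableSpace Ω] (μ : Measure Ω) [IsProbabilityMeasure μ]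
    (N : ℕ) (hN : 0 < N) (q : Fin N → ℝ) (hq : ∀ j, 0 < q j)
    (hsum : ∑ j, q j = 1)
    (X : ℕ → Ω → Fin N) (hXmeas : ∀ i, Measurable (X i))
    (hindep : iIndepFun X μ)
    (hdist : ∀ i j, μ {ω | X i ω = j} = ENNReal.ofReal (q j))
    (S : Ω → ℕ) (hS : ∀ ω, S ω = sInf {n : ℕ | ∀ j, ∃ i < n, X i ω = j}) :
    ∫ ω, (S ω : ℝ) * ((S ω : ℝ) + 1) ∂μ
      = 2 * ∫ t in Set.Ioi (0:ℝ), t * (1 - ∏ j, (1 - Real.exp (-q j * t))) :=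
  stmt_11_general μ N q hq X hXmeas hindep hdist S hS
end

section
/- For each k ∈ ℕ, the k-th derivative of the Gamma function at 1 satisfies Γ^{(k)}(1) = ∫_0^∞ e^{−x} (ln x)^k dx; in particular Γ'(1) = −γ and Γ''(1) = π²/6 + γ², where γ is the Euler–Mascheroni constant. -/
/-!
`Γ s` is the Mellin transform of `e^(-t)` at `s`, and differentiating a Mellin transform in `s`
multiplies the integrand by `log t`; this is legitimate for `e^(-t) (log t)^k` because it is
`O(t^(-b))` at `0` and `O(t^(-a))` at `∞` for all `b > 0` and all `a`. Hence
`Γ^(k)(s) = ∫ t^(s-1) e^(-t) (log t)^k dt` for `s > 0`.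

For `Γ''(1)`, put `G x = Γ(1 + x) Γ(1 - x)`, so that
`G''(0) = 2 Γ''(1) - 2 Γ'(1)²`. The reflection formula gives `G x sin (π x) = π x` near `0`, and
comparing third derivatives at `0` by the Leibniz rule gives `3 π G''(0) - π³ G(0) = 0`, i.e.
`G''(0) = π² / 3`.
-/

open MeasureTheory Real Filter Topology Set Asymptotics

theorem Complex.analyticAt_Gamma {s : ℂ} (hs : ∀ m : ℕ, s ≠ -m) : AnalyticAt ℂ Gamma s := by
  have h := (differentiable_one_div_Gamma.analyticAt s).inv (inv_ne_zero (Gamma_ne_zero hs))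
  simpa only [Pi.inv_def, inv_inv] using h

theorem Real.contDiffAt_Gamma {s : ℝ} (hs : ∀ m : ℕ, s ≠ -m) (n : WithTop ℕ∞) :
    ContDiffAt ℝ n Gamma s :=
  (Complex.analyticAt_Gamma (s := s) (by exact_mod_cast hs)).contDiffAt.real_of_complex

noncomputable def expNegLogPow (k : ℕ) (t : ℝ) : ℂ := ↑(exp (-t) * log t ^ k)

lemma expNegLogPow_succ (k : ℕ) (t : ℝ) : expNegLogPow (k + 1) t = log t • expNegLogPow k t := by
  simp only [expNegLogPow, Complex.real_smul, Complex.ofReal_mul, Complex.ofReal_pow]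
  ring

lemma locallyIntegrableOn_expNegLogPow (k : ℕ) : LocallyIntegrableOn (expNegLogPow k) (Ioi 0) := by
  refine ContinuousOn.locallyIntegrableOn ?_ measurableSet_Ioi
  refine Complex.continuous_ofReal.comp_continuousOn (ContinuousOn.mul (by fun_prop) ?_)
  exact (continuousOn_log.mono fun x hx => (mem_Ioi.mp hx).ne').pow k

lemma expNegLogPow_isBigO_atTop (k : ℕ) (a : ℝ) : expNegLogPow k =O[atTop] (· ^ (-a)) := by
  induction k generalizing a with
  | zero =>
    have h : (fun t => exp (-t)) =O[atTop] (· ^ (-a)) := by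
      simpa using (isLittleO_exp_neg_mul_rpow_atTop one_pos (-a)).isBigO
    refine IsBigO.trans (isBigO_of_le _ fun t => ?_) h
    rw [expNegLogPow, pow_zero, mul_one, Complex.norm_real]
  | succ k ih =>
    rw [funext (expNegLogPow_succ k)]
    exact isBigO_rpow_top_log_smul (lt_add_one a) (ih (a + 1))

lemma expNegLogPow_isBigO_nhdsGT_zero (k : ℕ) {b : ℝ} (hb : 0 < b) :
    expNegLogPow k =O[𝓝[>] 0] (· ^ (-b)) := by
  induction k generalizing b with
  | zero =>
    refine IsBigO.of_bound 1 ?_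
    filter_upwards [Ioo_mem_nhdsGT one_pos] with t ⟨ht₀, ht₁⟩
    have h₁ : exp (-t) ≤ 1 := exp_le_one_iff.mpr (by linarith)
    have h₂ : 1 ≤ t ^ (-b) := one_le_rpow_of_pos_of_le_one_of_nonpos ht₀ ht₁.le (by linarith)
    rw [expNegLogPow, pow_zero, mul_one, Complex.norm_real, norm_of_nonneg (exp_pos _).le,
      norm_of_nonneg (rpow_pos_of_pos ht₀ _).le, one_mul]
    exact h₁.trans h₂
  | succ k ih =>
    rw [funext (expNegLogPow_succ k)]
    exact isBigO_rpow_zero_log_smul (half_lt_self hb) (ih (half_pos hb))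

lemma hasDerivAt_mellin_expNegLogPow (k : ℕ) {s : ℂ} (hs : 0 < s.re) :
    HasDerivAt (mellin (expNegLogPow k)) (mellin (expNegLogPow (k + 1)) s) s := by
  have h := (mellin_hasDerivAt_of_isBigO_rpow (locallyIntegrableOn_expNegLogPow k)
    (expNegLogPow_isBigO_atTop k (s.re + 1)) (lt_add_one _)
    (expNegLogPow_isBigO_nhdsGT_zero k (half_pos hs)) (half_lt_self hs)).2
  simpa only [← expNegLogPow_succ] using h

lemma mellin_expNegLogPow_zero {s : ℂ} (hs : 0 < s.re) :
    mellin (expNegLogPow 0) s = Complex.Gamma s := by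
  rw [Complex.Gamma_eq_integral hs, Complex.GammaIntegral_eq_mellin]
  congr 1
  ext t
  simp [expNegLogPow]

lemma re_mellin_expNegLogPow (k : ℕ) (s : ℝ) :
    (mellin (expNegLogPow k) s).re = ∫ t in Ioi 0, t ^ (s - 1) * exp (-t) * log t ^ k := by
  have h : mellin (expNegLogPow k) s = ↑(∫ t in Ioi 0, t ^ (s - 1) * exp (-t) * log t ^ k) := by
    refine Eq.trans ?_ integral_ofReal
    refine setIntegral_congr_fun measurableSet_Ioi fun t ht => ?_
    simp [expNegLogPow, Complex.ofReal_cpow (le_of_lt ht), mul_assoc]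
  rw [h, Complex.ofReal_re]

theorem Real.iteratedDeriv_Gamma (k : ℕ) {s : ℝ} (hs : 0 < s) :
    iteratedDeriv k Gamma s = ∫ t in Ioi 0, t ^ (s - 1) * exp (-t) * log t ^ k := by
  rw [← re_mellin_expNegLogPow]
  induction k generalizing s with
  | zero =>
    rw [iteratedDeriv_zero, mellin_expNegLogPow_zero (by simpa using hs)]
    rfl
  | succ k ih =>
    have h : iteratedDeriv k Gamma =ᶠ[𝓝 s] fun s : ℝ => (mellin (expNegLogPow k) s).re :=
      eventually_of_mem (Ioi_mem_nhds hs) fun s hs => ih hs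
    rw [iteratedDeriv_succ, h.deriv_eq]
    exact (hasDerivAt_mellin_expNegLogPow k (by simpa using hs)).real_of_complex.deriv

theorem Real.Gamma_one_add_mul_Gamma_one_sub_mul_sin {x : ℝ} (hx : ∀ n : ℤ, n ≠ 0 → x ≠ n) :
    Gamma (1 + x) * Gamma (1 - x) * sin (π * x) = π * x := by
  rcases eq_or_ne x 0 with rfl | hx₀
  · simp
  have hsin : sin (π * x) ≠ 0 := by
    rw [Ne, sin_eq_zero_iff]
    rintro ⟨n, hn⟩
    have hn₀ : n ≠ 0 := by rintro rfl; simp [pi_ne_zero, hx₀] at hn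
    exact hx n hn₀ (by nlinarith [pi_pos])
  rw [add_comm, Gamma_add_one hx₀, mul_assoc x, Gamma_mul_Gamma_one_sub,
    mul_assoc, div_mul_cancel₀ _ hsin, mul_comm]

theorem Real.Gamma_one_add_mul_Gamma_one_sub_mul_sin_eventuallyEq :
    (fun x => Gamma (1 + x) * Gamma (1 - x) * sin (π * x)) =ᶠ[𝓝 0] fun x => π * x := by
  filter_upwards [Ioo_mem_nhds (neg_lt_zero.mpr one_pos) one_pos] with x ⟨hx₁, hx₂⟩
  refine Gamma_one_add_mul_Gamma_one_sub_mul_sin fun n hn hxn => hn ?_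
  subst hxn
  have : (-1 : ℤ) < n ∧ n < 1 := ⟨by exact_mod_cast hx₁, by exact_mod_cast hx₂⟩
  omega

section Shift

variable {𝕜 F : Type*} [NontriviallyNormedField 𝕜] [NormedAddCommGroup F] [NormedSpace 𝕜 F]
  {n : WithTop ℕ∞} {f : 𝕜 → F} {a : 𝕜}

theorem ContDiffAt.comp_const_add_zero (hf : ContDiffAt 𝕜 n f a) :
    ContDiffAt 𝕜 n (fun x => f (a + x)) 0 :=
  ContDiffAt.comp (g := f) 0 (by simpa using hf) (by fun_prop)

theorem ContDiffAt.comp_const_sub_zero (hf : ContDiffAt 𝕜 n f a) :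
    ContDiffAt 𝕜 n (fun x => f (a - x)) 0 :=
  ContDiffAt.comp (g := f) 0 (by simpa using hf) (by fun_prop)

end Shift

theorem iteratedDeriv_two_comp_const_add_mul_comp_const_sub {𝕜 : Type*} [NontriviallyNormedField 𝕜]
    {f : 𝕜 → 𝕜} {a : 𝕜} (hf : ContDiffAt 𝕜 2 f a) :
    iteratedDeriv 2 (fun x => f (a + x) * f (a - x)) 0
      = 2 * f a * iteratedDeriv 2 f a - 2 * deriv f a ^ 2 := by
  calc _ = f a * iteratedDeriv 2 f a + 2 * deriv f a * -deriv f a + iteratedDeriv 2 f a * f a := by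
        simp [iteratedDeriv_fun_mul hf.comp_const_add_zero hf.comp_const_sub_zero,
          Finset.sum_range_succ, iteratedDeriv_comp_const_add, iteratedDeriv_comp_const_sub]
    _ = _ := by ring

theorem iteratedDeriv_two_eq_of_mul_sin_eq {g : ℝ → ℝ} {c : ℝ} (hc : c ≠ 0)
    (hg : ContDiffAt ℝ 3 g 0) (h : (fun x => g x * sin (c * x)) =ᶠ[𝓝 0] fun x => c * x) :
    iteratedDeriv 2 g 0 = c ^ 2 * g 0 / 3 := by
  have hsin : ContDiffAt ℝ 3 (fun x => sin (c * x)) 0 := by fun_prop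
  have h3 : -(g 0 * c ^ 3) + 3 * iteratedDeriv 2 g 0 * c = 0 := by
    simpa [iteratedDeriv_fun_mul hg hsin, Finset.sum_range_succ,
      iteratedDeriv_comp_const_mul contDiff_sin, iteratedDeriv_const_mul_field c (fun x => x),
      iteratedDeriv_fun_id] using h.iteratedDeriv_eq 3
  have : c * (3 * iteratedDeriv 2 g 0) = c * (c ^ 2 * g 0) := by linear_combination h3
  linarith [mul_left_cancel₀ hc this]

theorem stmt_19 :
    (∀ k : ℕ,
      iteratedDeriv k Real.Gamma 1
        = ∫ x in Set.Ioi (0:ℝ), Real.exp (-x) * Real.log x ^ k) ∧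
    deriv Real.Gamma 1 = -Real.eulerMascheroniConstant ∧
    iteratedDeriv 2 Real.Gamma 1
      = Real.pi ^ 2 / 6 + Real.eulerMascheroniConstant ^ 2 := by
  have hΓ : ∀ n : WithTop ℕ∞, ContDiffAt ℝ n Gamma 1 :=
    contDiffAt_Gamma fun m => by linarith [m.cast_nonneg (α := ℝ)]
  have hΓ' : deriv Gamma 1 = -eulerMascheroniConstant := hasDerivAt_Gamma_one.deriv
  have hG'' := iteratedDeriv_two_eq_of_mul_sin_eq pi_ne_zero
    ((hΓ 3).comp_const_add_zero.mul (hΓ 3).comp_const_sub_zero)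
    Gamma_one_add_mul_Gamma_one_sub_mul_sin_eventuallyEq
  rw [iteratedDeriv_two_comp_const_add_mul_comp_const_sub (hΓ 2)] at hG''
  refine ⟨fun k => by simpa using iteratedDeriv_Gamma k one_pos, hΓ', ?_⟩
  simp only [add_zero, sub_zero, Gamma_one, hΓ'] at hG''
  linarith
end
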